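/- Let 𝒫 be a converting vector set from ρ to σ, let x ∈ X, and let α, ε̂ > 0. Then the vector |w⟩ := √(α/ε̂)·|ψ_{x,α,ε̂}⟩ satisfies: (i) Λ^{α,ε̂}|w⟩ = 0; (ii) Π_x|w⟩ = |t_{x−}⟩; and (iii) ‖|w⟩‖² = 1 + (α/ε̂)·w_+(𝒫, x). -/

import Mathlib

noncomputable section

open Finset

variable {q n m : ℕ} {𝓗 : Type*} [NormedAddCommGroup 𝓗] [InnerProductSpace ℂ 𝓗]

/-- `(u, v)` is a converting vector set from `ρ` to `σ` (relative to `X`):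
for all `x, y ∈ X`, `⟨ρ_x|ρ_y⟩ − ⟨σ_x|σ_y⟩ = Σ_{j : x_j ≠ y_j} ⟨u_{xj}|v_{yj}⟩`. -/
def IsCVS (X : Finset (Fin n → Fin q)) (ρ σ : (Fin n → Fin q) → 𝓗)
    (u v : (Fin n → Fin q) → Fin n → EuclideanSpace ℂ (Fin m)) : Prop :=
  ∀ x ∈ X, ∀ y ∈ X,
    (inner ℂ (ρ x) (ρ y) : ℂ) - (inner ℂ (σ x) (σ y) : ℂ) =
      ∑ j ∈ Finset.univ.filter (fun j => x j ≠ y j), (inner ℂ (u x j) (v y j) : ℂ)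

/-- witness size of a family of vectors: `Σ_j ‖u_{xj}‖²`. -/
def wSize (u : (Fin n → Fin q) → Fin n → EuclideanSpace ℂ (Fin m))
    (x : Fin n → Fin q) : ℝ :=
  ∑ j : Fin n, ‖u x j‖ ^ 2

/-- The space `(ℂ²⊗𝒣) ⊕ (ℂⁿ⊗ℂ^q⊗ℂ^m)`, realized as the `L²` direct sum of
`𝒣 ⊕ 𝒣` (the two components of `ℂ²⊗𝒣`) and `n` copies of `ℂ^{q×m}`. -/
abbrev BigSpace (𝓗 : Type*) [NormedAddCommGroup 𝓗] [InnerProductSpace ℂ 𝓗]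
    (q n m : ℕ) : Type _ :=
  WithLp 2 ((PiLp 2 fun _ : Fin 2 => 𝓗) ×
    (PiLp 2 fun _ : Fin n => EuclideanSpace ℂ (Fin q × Fin m)))

/-- build an element of `BigSpace` from its two components. -/
def mkBig (a : PiLp 2 fun _ : Fin 2 => 𝓗)
    (g : PiLp 2 fun _ : Fin n => EuclideanSpace ℂ (Fin q × Fin m)) :
    BigSpace 𝓗 q n m :=
  (WithLp.equiv 2 _).symm (a, g)

/-- `|0⟩a + |1⟩b ∈ ℂ²⊗𝒣`. -/
def mk2 (a b : 𝓗) : PiLp 2 fun _ : Fin 2 => 𝓗 :=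
  (WithLp.equiv 2 _).symm (fun i => if i = 0 then a else b)

/-- build an element of `ℂⁿ⊗ℂ^q⊗ℂ^m` from its components. -/
def mkPi (g : Fin n → EuclideanSpace ℂ (Fin q × Fin m)) :
    PiLp 2 fun _ : Fin n => EuclideanSpace ℂ (Fin q × Fin m) :=
  (WithLp.equiv 2 _).symm g

/-- the pure tensor `ν ⊗ w ∈ ℂ^q ⊗ ℂ^m`. -/
def tens (ν : EuclideanSpace ℂ (Fin q)) (w : EuclideanSpace ℂ (Fin m)) :
    EuclideanSpace ℂ (Fin q × Fin m) :=
  (WithLp.equiv 2 _).symm fun p => ν p.1 * w p.2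

/-- `|t_{x+}⟩ = (1/√2)(|0⟩|ρ_x⟩ + |1⟩|σ_x⟩)`. -/
def tPlus (ρ σ : (Fin n → Fin q) → 𝓗) (x : Fin n → Fin q) :
    BigSpace 𝓗 q n m :=
  mkBig (mk2 ((((Real.sqrt 2 : ℝ) : ℂ))⁻¹ • ρ x) ((((Real.sqrt 2 : ℝ) : ℂ))⁻¹ • σ x)) 0

/-- `|t_{x−}⟩ = (1/√2)(|0⟩|ρ_x⟩ − |1⟩|σ_x⟩)`. -/
def tMinus (ρ σ : (Fin n → Fin q) → 𝓗) (x : Fin n → Fin q) :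
    BigSpace 𝓗 q n m :=
  mkBig (mk2 ((((Real.sqrt 2 : ℝ) : ℂ))⁻¹ • ρ x) (-((((Real.sqrt 2 : ℝ) : ℂ))⁻¹ • σ x))) 0

/-- `|ψ_{x,α,ε̂}⟩ = √(ε̂/α)|t_{x−}⟩ − Σ_j |j⟩|μ_{x_j}⟩|u_{xj}⟩`. -/
def psi (ρ σ : (Fin n → Fin q) → 𝓗)
    (u : (Fin n → Fin q) → Fin n → EuclideanSpace ℂ (Fin m))
    (μ : Fin q → EuclideanSpace ℂ (Fin q)) (α εh : ℝ) (x : Fin n → Fin q) :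
    BigSpace 𝓗 q n m :=
  (((Real.sqrt (εh / α) : ℝ) : ℂ)) • tMinus ρ σ x -
    mkBig 0 (mkPi fun j => tens (μ (x j)) (u x j))

/-- `⟨ν| ⊗ I : ℂ^q ⊗ ℂ^m → ℂ^m`, contraction of the first tensor factor with `ν`. -/
def contractL (ν : EuclideanSpace ℂ (Fin q)) :
    EuclideanSpace ℂ (Fin q × Fin m) →ₗ[ℂ] EuclideanSpace ℂ (Fin m) :=
  (WithLp.linearEquiv 2 ℂ (Fin m → ℂ)).symm.toLinearMap ∘ₗ
    LinearMap.pi fun k => (innerSL ℂ (tens ν (EuclideanSpace.single k 1))).toLinearMap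

/-- `|ν⟩ ⊗ I : ℂ^m → ℂ^q ⊗ ℂ^m`, tensoring with `ν`. -/
def tensL (ν : EuclideanSpace ℂ (Fin q)) :
    EuclideanSpace ℂ (Fin m) →ₗ[ℂ] EuclideanSpace ℂ (Fin q × Fin m) :=
  (WithLp.linearEquiv 2 ℂ (Fin q × Fin m → ℂ)).symm.toLinearMap ∘ₗ
    LinearMap.pi fun p : Fin q × Fin m =>
      ν p.1 • (LinearMap.proj p.2 ∘ₗ (WithLp.linearEquiv 2 ℂ (Fin m → ℂ)).toLinearMap)

/-- `|ν⟩⟨ν| ⊗ I` on `ℂ^q ⊗ ℂ^m`. -/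
def projMu (ν : EuclideanSpace ℂ (Fin q)) :
    EuclideanSpace ℂ (Fin q × Fin m) →ₗ[ℂ] EuclideanSpace ℂ (Fin q × Fin m) :=
  tensL ν ∘ₗ contractL ν

/-- `Σ_j |j⟩⟨j| ⊗ |μ_{x_j}⟩⟨μ_{x_j}| ⊗ I` on `ℂⁿ⊗ℂ^q⊗ℂ^m`. -/
def sumProjMu (μ : Fin q → EuclideanSpace ℂ (Fin q)) (x : Fin n → Fin q) :
    (PiLp 2 fun _ : Fin n => EuclideanSpace ℂ (Fin q × Fin m)) →ₗ[ℂ]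
      (PiLp 2 fun _ : Fin n => EuclideanSpace ℂ (Fin q × Fin m)) :=
  (WithLp.linearEquiv 2 ℂ (∀ _ : Fin n, EuclideanSpace ℂ (Fin q × Fin m))).symm.toLinearMap ∘ₗ
    (LinearMap.pi fun j => projMu (μ (x j)) ∘ₗ LinearMap.proj j) ∘ₗ
    (WithLp.linearEquiv 2 ℂ (∀ _ : Fin n, EuclideanSpace ℂ (Fin q × Fin m))).toLinearMap

/-- the canonical linear identification of `BigSpace` with the product. -/
def bigEquiv (𝓗 : Type*) [NormedAddCommGroup 𝓗] [InnerProductSpace ℂ 𝓗] (q n m : ℕ) :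
    BigSpace 𝓗 q n m ≃ₗ[ℂ]
      (PiLp 2 fun _ : Fin 2 => 𝓗) ×
        (PiLp 2 fun _ : Fin n => EuclideanSpace ℂ (Fin q × Fin m)) :=
  WithLp.linearEquiv 2 ℂ _

/-- `Π_x = I − Σ_j |j⟩⟨j| ⊗ |μ_{x_j}⟩⟨μ_{x_j}| ⊗ I` on `(ℂ²⊗𝒣) ⊕ (ℂⁿ⊗ℂ^q⊗ℂ^m)`. -/
def PiX (μ : Fin q → EuclideanSpace ℂ (Fin q)) (x : Fin n → Fin q) :
    BigSpace 𝓗 q n m →ₗ[ℂ] BigSpace 𝓗 q n m :=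
  LinearMap.id -
    (bigEquiv 𝓗 q n m).symm.toLinearMap ∘ₗ
      (LinearMap.prodMap 0 (sumProjMu μ x)) ∘ₗ (bigEquiv 𝓗 q n m).toLinearMap

/-- orthogonal projection onto a submodule, as an endomorphism. -/
def projL {K : Type*} [NormedAddCommGroup K] [InnerProductSpace ℂ K] [FiniteDimensional ℂ K]
    (S : Submodule ℂ K) : K →ₗ[ℂ] K :=
  S.subtype ∘ₗ (S.orthogonalProjection).toLinearMap

/-- `Λ^{α,ε̂}`: the orthogonal projection onto the orthogonal complement of
`span{|ψ_{x,α,ε̂}⟩ : x ∈ X}`. -/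
def LambdaCVS [FiniteDimensional ℂ 𝓗] (X : Finset (Fin n → Fin q))
    (ρ σ : (Fin n → Fin q) → 𝓗)
    (u : (Fin n → Fin q) → Fin n → EuclideanSpace ℂ (Fin m))
    (μ : Fin q → EuclideanSpace ℂ (Fin q)) (α εh : ℝ) :
    BigSpace 𝓗 q n m →ₗ[ℂ] BigSpace 𝓗 q n m :=
  projL ((Submodule.span ℂ ((fun x => psi ρ σ u μ α εh x) '' (X : Set (Fin n → Fin q))))ᗮ)

/-- `U(𝒫, x, α, ε̂) = (2Π_x − I)(2Λ^{α,ε̂} − I)`. -/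
def Ucvs [FiniteDimensional ℂ 𝓗] (X : Finset (Fin n → Fin q))
    (ρ σ : (Fin n → Fin q) → 𝓗)
    (u : (Fin n → Fin q) → Fin n → EuclideanSpace ℂ (Fin m))
    (μ : Fin q → EuclideanSpace ℂ (Fin q)) (α εh : ℝ) (x : Fin n → Fin q) :
    BigSpace 𝓗 q n m →ₗ[ℂ] BigSpace 𝓗 q n m :=
  (2 • PiX μ x - LinearMap.id) ∘ₗ (2 • LambdaCVS X ρ σ u μ α εh - LinearMap.id)

/-- `phaseSpace U Θ` is the span of the eigenvectors of `U` with eigenvalue `e^{iθ}`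
for `|θ| ≤ Θ`; the orthogonal projection onto it is `P_Θ(U)`. -/
def phaseSpace {K : Type*} [NormedAddCommGroup K] [InnerProductSpace ℂ K]
    (U : K →ₗ[ℂ] K) (Θ : ℝ) : Submodule ℂ K :=
  ⨆ θ : Set.Icc (-Θ) Θ, Module.End.eigenspace U (Complex.exp (Complex.I * (θ : ℝ)))

/-!
Since `√(α/ε̂) · √(ε̂/α) = 1`, the vector is `w = t_{x−} − √(α/ε̂) Σ_j |j⟩|μ_{x_j}⟩|u_{xj}⟩`.
Because each `μ_{x_j}` is a unit vector, the second summand is fixed by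
`Σ_j |j⟩⟨j| ⊗ |μ_{x_j}⟩⟨μ_{x_j}| ⊗ I`, so `Π_x` kills it, while `t_{x−}` lives in the `ℂ² ⊗ 𝒣`
block that `Π_x` fixes; this gives `Π_x w = t_{x−}`, and the orthogonality of the two blocks gives
the norm by Pythagoras. Finally `w` is a multiple of `ψ_x`, which lies in the span that `Λ`
projects away from.
-/

lemma inner_tens (ν ν' : EuclideanSpace ℂ (Fin q)) (w w' : EuclideanSpace ℂ (Fin m)) :
    inner ℂ (tens ν w) (tens ν' w') = inner ℂ ν ν' * inner ℂ w w' := by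
  simp only [tens, PiLp.inner_apply, RCLike.inner_apply, WithLp.equiv_symm_apply]
  rw [Finset.sum_mul_sum, ← Finset.sum_product', ← Finset.univ_product_univ]
  refine Finset.sum_congr rfl fun p _ => ?_
  simp only [map_mul]
  ring

lemma norm_tens (ν : EuclideanSpace ℂ (Fin q)) (w : EuclideanSpace ℂ (Fin m)) :
    ‖tens ν w‖ = ‖ν‖ * ‖w‖ := by
  have h := inner_tens ν ν w w
  simp only [inner_self_eq_norm_sq_to_K] at h
  rw [← sq_eq_sq₀ (norm_nonneg _) (by positivity), mul_pow]
  exact_mod_cast h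

lemma contractL_tens {ν : EuclideanSpace ℂ (Fin q)} (hν : ‖ν‖ = 1)
    (w : EuclideanSpace ℂ (Fin m)) : contractL ν (tens ν w) = w := by
  ext k
  simp only [contractL, LinearMap.comp_apply, LinearEquiv.coe_toLinearMap,
    WithLp.coe_symm_linearEquiv, PiLp.toLp_apply, LinearMap.pi_apply,
    ContinuousLinearMap.coe_coe, innerSL_apply_apply]
  rw [inner_tens, inner_self_eq_norm_sq_to_K, hν, EuclideanSpace.inner_single_left]
  simp

lemma tensL_apply (ν : EuclideanSpace ℂ (Fin q)) (w : EuclideanSpace ℂ (Fin m)) :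
    tensL ν w = tens ν w := rfl

lemma projMu_tens {ν : EuclideanSpace ℂ (Fin q)} (hν : ‖ν‖ = 1)
    (w : EuclideanSpace ℂ (Fin m)) : projMu ν (tens ν w) = tens ν w := by
  rw [projMu, LinearMap.comp_apply, contractL_tens hν, tensL_apply]

lemma norm_sq_mkBig (a : PiLp 2 fun _ : Fin 2 => 𝓗)
    (g : PiLp 2 fun _ : Fin n => EuclideanSpace ℂ (Fin q × Fin m)) :
    ‖mkBig a g‖ ^ 2 = ‖a‖ ^ 2 + ‖g‖ ^ 2 :=
  WithLp.prod_norm_sq_eq_of_L2 _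

lemma inner_mkBig (a a' : PiLp 2 fun _ : Fin 2 => 𝓗)
    (g g' : PiLp 2 fun _ : Fin n => EuclideanSpace ℂ (Fin q × Fin m)) :
    inner ℂ (mkBig a g) (mkBig a' g') = inner ℂ a a' + inner ℂ g g' :=
  rfl

lemma norm_sq_mk2 {E : Type*} [SeminormedAddCommGroup E] (a b : E) :
    ‖mk2 a b‖ ^ 2 = ‖a‖ ^ 2 + ‖b‖ ^ 2 := by
  rw [PiLp.norm_sq_eq_of_L2, Fin.sum_univ_two]
  rfl

lemma norm_sq_mkPi (g : Fin n → EuclideanSpace ℂ (Fin q × Fin m)) :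
    ‖mkPi g‖ ^ 2 = ∑ j, ‖g j‖ ^ 2 :=
  PiLp.norm_sq_eq_of_L2 _ _

lemma norm_sq_tMinus (ρ σ : (Fin n → Fin q) → 𝓗) (x : Fin n → Fin q) :
    ‖(tMinus ρ σ x : BigSpace 𝓗 q n m)‖ ^ 2 = (‖ρ x‖ ^ 2 + ‖σ x‖ ^ 2) / 2 := by
  rw [tMinus, norm_sq_mkBig, norm_sq_mk2, norm_neg, norm_smul, norm_smul, norm_inv,
    Complex.norm_real, Real.norm_of_nonneg (Real.sqrt_nonneg 2)]
  field_simp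
  rw [Real.sq_sqrt zero_le_two, norm_zero]
  ring

lemma PiX_mkBig (μ : Fin q → EuclideanSpace ℂ (Fin q)) (x : Fin n → Fin q)
    (a : PiLp 2 fun _ : Fin 2 => 𝓗)
    (g : PiLp 2 fun _ : Fin n => EuclideanSpace ℂ (Fin q × Fin m)) :
    PiX μ x (mkBig a g) = mkBig a (g - sumProjMu μ x g) := by
  simp only [PiX, mkBig, bigEquiv, LinearMap.sub_apply, LinearMap.comp_apply,
    LinearEquiv.coe_toLinearMap, WithLp.coe_linearEquiv, WithLp.coe_symm_linearEquiv,
    WithLp.equiv_symm_apply, LinearMap.prodMap_apply, LinearMap.id_apply,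
    LinearMap.zero_apply]
  rw [← WithLp.toLp_sub, Prod.mk_sub_mk, sub_zero]

lemma sumProjMu_mkPi_tens {μ : Fin q → EuclideanSpace ℂ (Fin q)} {x : Fin n → Fin q}
    (hμ : ∀ j, ‖μ (x j)‖ = 1) (g : Fin n → EuclideanSpace ℂ (Fin m)) :
    sumProjMu μ x (mkPi fun j => tens (μ (x j)) (g j)) = mkPi fun j => tens (μ (x j)) (g j) := by
  ext j : 1
  exact projMu_tens (hμ j) (g j)

lemma projL_orthogonal_apply_of_mem {K : Type*} [NormedAddCommGroup K] [InnerProductSpace ℂ K]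
    [FiniteDimensional ℂ K] {S : Submodule ℂ K} {w : K} (hw : w ∈ S) : projL Sᗮ w = 0 := by
  rw [projL, LinearMap.comp_apply, ContinuousLinearMap.coe_coe,
    Submodule.orthogonalProjectionOnto_orthogonal_apply_eq_zero hw, map_zero]

lemma PiX_tMinus (μ : Fin q → EuclideanSpace ℂ (Fin q)) (ρ σ : (Fin n → Fin q) → 𝓗)
    (x : Fin n → Fin q) : PiX μ x (tMinus ρ σ x : BigSpace 𝓗 q n m) = tMinus ρ σ x := by
  rw [tMinus, PiX_mkBig, map_zero, sub_zero]

/-- The vector `Σ_j |j⟩|μ_{x_j}⟩|u_{xj}⟩` of the paper. -/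
def witnessVec (u : (Fin n → Fin q) → Fin n → EuclideanSpace ℂ (Fin m))
    (μ : Fin q → EuclideanSpace ℂ (Fin q)) (x : Fin n → Fin q) : BigSpace 𝓗 q n m :=
  mkBig 0 (mkPi fun j => tens (μ (x j)) (u x j))

section witnessVec

variable {μ : Fin q → EuclideanSpace ℂ (Fin q)}
  (u : (Fin n → Fin q) → Fin n → EuclideanSpace ℂ (Fin m)) (x : Fin n → Fin q)

lemma PiX_witnessVec (hμ : ∀ j, ‖μ (x j)‖ = 1) :
    PiX μ x (witnessVec u μ x : BigSpace 𝓗 q n m) = 0 := by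
  rw [witnessVec, PiX_mkBig, sumProjMu_mkPi_tens hμ, sub_self]
  rfl

lemma norm_sq_witnessVec (hμ : ∀ j, ‖μ (x j)‖ = 1) :
    ‖(witnessVec u μ x : BigSpace 𝓗 q n m)‖ ^ 2 = wSize u x := by
  simp only [witnessVec, norm_sq_mkBig, norm_sq_mkPi, norm_tens, hμ, norm_zero, one_mul]
  simp [wSize]

lemma inner_tMinus_witnessVec (ρ σ : (Fin n → Fin q) → 𝓗) :
    inner ℂ (tMinus ρ σ x) (witnessVec u μ x : BigSpace 𝓗 q n m) = 0 := by
  rw [tMinus, witnessVec, inner_mkBig, inner_zero_left, inner_zero_right, add_zero]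

lemma norm_sq_tMinus_sub_smul_witnessVec (hμ : ∀ j, ‖μ (x j)‖ = 1)
    (ρ σ : (Fin n → Fin q) → 𝓗) (c : ℂ) :
    ‖(tMinus ρ σ x - c • witnessVec u μ x : BigSpace 𝓗 q n m)‖ ^ 2 =
      (‖ρ x‖ ^ 2 + ‖σ x‖ ^ 2) / 2 + ‖c‖ ^ 2 * wSize u x := by
  rw [@norm_sub_sq ℂ, inner_smul_right, inner_tMinus_witnessVec, mul_zero, map_zero, mul_zero,
    sub_zero, norm_sq_tMinus, norm_smul, mul_pow, norm_sq_witnessVec u x hμ]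

end witnessVec

lemma psi_eq (ρ σ : (Fin n → Fin q) → 𝓗)
    (u : (Fin n → Fin q) → Fin n → EuclideanSpace ℂ (Fin m))
    (μ : Fin q → EuclideanSpace ℂ (Fin q)) (α εh : ℝ) (x : Fin n → Fin q) :
    (psi ρ σ u μ α εh x : BigSpace 𝓗 q n m) =
      ((√(εh / α) : ℝ) : ℂ) • tMinus ρ σ x - witnessVec u μ x :=
  rfl

lemma smul_psi_eq (ρ σ : (Fin n → Fin q) → 𝓗)
    (u : (Fin n → Fin q) → Fin n → EuclideanSpace ℂ (Fin m))
    (μ : Fin q → EuclideanSpace ℂ (Fin q)) {α εh : ℝ} (hα : 0 < α) (hε : 0 < εh)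
    (x : Fin n → Fin q) :
    ((√(α / εh) : ℝ) : ℂ) • (psi ρ σ u μ α εh x : BigSpace 𝓗 q n m) =
      tMinus ρ σ x - ((√(α / εh) : ℝ) : ℂ) • witnessVec u μ x := by
  have hsqrt : √(α / εh) * √(εh / α) = 1 := by
    rw [← Real.sqrt_mul (div_pos hα hε).le, div_mul_div_comm, mul_comm α,
      div_self (by positivity), Real.sqrt_one]
  rw [psi_eq, smul_sub, smul_smul, ← Complex.ofReal_mul, hsqrt, Complex.ofReal_one, one_smul]

lemma LambdaCVS_smul_psi [FiniteDimensional ℂ 𝓗] {X : Finset (Fin n → Fin q)}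
    (ρ σ : (Fin n → Fin q) → 𝓗) (u : (Fin n → Fin q) → Fin n → EuclideanSpace ℂ (Fin m))
    (μ : Fin q → EuclideanSpace ℂ (Fin q)) (α εh : ℝ) {x : Fin n → Fin q} (hx : x ∈ X) (c : ℂ) :
    LambdaCVS X ρ σ u μ α εh (c • psi ρ σ u μ α εh x) = 0 :=
  projL_orthogonal_apply_of_mem (Submodule.smul_mem _ c (Submodule.subset_span ⟨x, hx, rfl⟩))

theorem scaled_psi_properties_general [FiniteDimensional ℂ 𝓗]
    (X : Finset (Fin n → Fin q)) (ρ σ : (Fin n → Fin q) → 𝓗)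
    (hρ : ∀ x ∈ X, ‖ρ x‖ = 1) (hσ : ∀ x ∈ X, ‖σ x‖ = 1)
    (u : (Fin n → Fin q) → Fin n → EuclideanSpace ℂ (Fin m))
    (μ : Fin q → EuclideanSpace ℂ (Fin q)) (hμ : ∀ i, ‖μ i‖ = 1)
    (x : Fin n → Fin q) (hx : x ∈ X)
    (α εh : ℝ) (hα : 0 < α) (hε : 0 < εh)
    (w : BigSpace 𝓗 q n m)
    (hw : w = (((Real.sqrt (α / εh) : ℝ) : ℂ)) • psi ρ σ u μ α εh x) :
    LambdaCVS X ρ σ u μ α εh w = 0 ∧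
      PiX μ x w = tMinus ρ σ x ∧
      ‖w‖ ^ 2 = 1 + (α / εh) * wSize u x := by
  subst hw
  refine ⟨LambdaCVS_smul_psi ρ σ u μ α εh hx _, ?_, ?_⟩
  · rw [smul_psi_eq ρ σ u μ hα hε, map_sub, map_smul, PiX_tMinus,
      PiX_witnessVec u x fun j => hμ (x j), smul_zero, sub_zero]
  · rw [smul_psi_eq ρ σ u μ hα hε,
      norm_sq_tMinus_sub_smul_witnessVec u x (fun j => hμ (x j)), hρ x hx, hσ x hx,
      Complex.norm_real, Real.norm_of_nonneg (Real.sqrt_nonneg _),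
      Real.sq_sqrt (div_pos hα hε).le]
    norm_num

/-- `|w⟩ = √(α/ε̂)|ψ_{x,α,ε̂}⟩` satisfies `Λ^{α,ε̂}|w⟩ = 0`,
`Π_x|w⟩ = |t_{x−}⟩`, and `‖w‖² = 1 + (α/ε̂)·w_+(𝒫,x)`. -/
theorem scaled_psi_properties (hq : 2 ≤ q) (hn : 1 ≤ n) (hm : 1 ≤ m) [FiniteDimensional ℂ 𝓗]
    (X : Finset (Fin n → Fin q)) (ρ σ : (Fin n → Fin q) → 𝓗)
    (hρ : ∀ x ∈ X, ‖ρ x‖ = 1) (hσ : ∀ x ∈ X, ‖σ x‖ = 1)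
    (u v : (Fin n → Fin q) → Fin n → EuclideanSpace ℂ (Fin m))
    (hP : IsCVS X ρ σ u v)
    (μ : Fin q → EuclideanSpace ℂ (Fin q)) (hμ : ∀ i, ‖μ i‖ = 1)
    (x : Fin n → Fin q) (hx : x ∈ X)
    (α εh : ℝ) (hα : 0 < α) (hε : 0 < εh)
    (w : BigSpace 𝓗 q n m)
    (hw : w = (((Real.sqrt (α / εh) : ℝ) : ℂ)) • psi ρ σ u μ α εh x) :
    LambdaCVS X ρ σ u μ α εh w = 0 ∧
      PiX μ x w = tMinus ρ σ x ∧
      ‖w‖ ^ 2 = 1 + (α / εh) * wSize u x :=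
  scaled_psi_properties_general X ρ σ hρ hσ u μ hμ x hx α εh hα hε w hw
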